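/- arXiv:1107.5776 — 5 statements merged into one kernel-verified Lean document; each statement's English description precedes it below -/
import Mathlib

section
/- Let T>0 and let z:[0,T]→ℝ^d be continuous with z^i(0)≥0 for every i=1,…,d. Define y:[0,T]→ℝ^d componentwise by y^i(t) = sup_{s∈[0,t]} max(−z^i(s),0) and set x = z + y. Then: (1) x(t) ∈ ℝ_+^d for every t ∈ [0,T]; (2) for each i, y^i(0)=0, y^i is continuous and nondecreasing; (3) for each i, the Lebesgue–Stieltjes measure associated to the nondecreasing continuous function y^i assigns zero mass to the set {t ∈ [0,T] : x^i(t) > 0}, i.e. y^i increases only when x^i is at zero. -/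
open Set Filter Topology MeasureTheory

/-!
The regulator is the running maximum `M t = sup_{[0,t]} max (-z) 0` of a continuous function:
it is monotone, and continuous because on `[0, T]` it is a supremum over a fixed compact set of
the jointly continuous `(t, s) ↦ max (-z (min s t)) 0`. It cannot grow on an interval where
`x = z + M > 0`: otherwise its value at the right end is `max (-z u) 0` at a point `u` where this
exceeds all earlier values, which forces `M u = -z u`, i.e. `x u = 0`. By continuity of `x`, the
(constant extension of the) regulator is therefore locally constant around every point where
`x > 0`, and a Stieltjes measure gives no mass to such a set.
-/

noncomputable def runningSup (g : ℝ → ℝ) (t : ℝ) : ℝ := sSup (g '' Icc 0 t)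

section RunningSup

variable {g : ℝ → ℝ} {T : ℝ}

lemma bddAbove_image_Icc_zero (hg : ContinuousOn g (Icc 0 T)) {t : ℝ} (ht : t ≤ T) :
    BddAbove (g '' Icc 0 t) :=
  (isCompact_Icc.image_of_continuousOn (hg.mono (Icc_subset_Icc_right ht))).bddAbove

lemma le_runningSup (hg : ContinuousOn g (Icc 0 T)) {s t : ℝ} (hs : s ∈ Icc 0 t)
    (ht : t ≤ T) : g s ≤ runningSup g t :=
  le_csSup (bddAbove_image_Icc_zero hg ht) (mem_image_of_mem g hs)

@[simp]
lemma runningSup_zero : runningSup g 0 = g 0 := by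
  simp [runningSup]

lemma monotoneOn_runningSup (hg : ContinuousOn g (Icc 0 T)) :
    MonotoneOn (runningSup g) (Icc 0 T) := fun _ ha _ hb hab =>
  csSup_le_csSup (bddAbove_image_Icc_zero hg hb.2) ((nonempty_Icc.2 ha.1).image g)
    (image_mono (Icc_subset_Icc_right hab))

lemma runningSup_eq_max (hg : ContinuousOn g (Icc 0 T)) {a b : ℝ} (ha : 0 ≤ a) (hab : a ≤ b)
    (hb : b ≤ T) : runningSup g b = max (runningSup g a) (sSup (g '' Icc a b)) := by
  rw [runningSup, ← Icc_union_Icc_eq_Icc ha hab, image_union,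
    csSup_union (bddAbove_image_Icc_zero hg (hab.trans hb)) ((nonempty_Icc.2 ha).image g)
      ((bddAbove_image_Icc_zero hg hb).mono (image_mono (Icc_subset_Icc_left ha)))
      ((nonempty_Icc.2 hab).image g)]
  rfl

lemma continuousOn_runningSup (hg : ContinuousOn g (Icc 0 T)) :
    ContinuousOn (runningSup g) (Icc 0 T) := by
  rcases lt_or_ge T 0 with hT | hT
  · simp [Icc_eq_empty_of_lt hT]
  set G := IccExtend hT ((Icc 0 T).domRestrict g)
  have hGg : ∀ u ∈ Icc 0 T, G u = g u := fun u hu => IccExtend_of_mem _ _ hu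
  have hG : Continuous fun p : ℝ × ℝ => G (min p.2 p.1) :=
    hg.domRestrict.Icc_extend'.comp (continuous_snd.min continuous_fst)
  refine ((isCompact_Icc (a := 0) (b := T)).continuous_sSup (f := fun t s => G (min s t))
    hG).continuousOn.congr fun t ht => ?_
  show sSup (g '' Icc 0 t) = sSup ((fun s => G (min s t)) '' Icc 0 T)
  congr 1
  ext v
  constructor
  · rintro ⟨u, hu, rfl⟩
    exact ⟨u, ⟨hu.1, hu.2.trans ht.2⟩, by
      simp only [min_eq_left hu.2, hGg u ⟨hu.1, hu.2.trans ht.2⟩]⟩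
  · rintro ⟨s, hs, rfl⟩
    exact ⟨min s t, ⟨le_min hs.1 ht.1, min_le_right s t⟩,
      (hGg _ ⟨le_min hs.1 ht.1, (min_le_right s t).trans ht.2⟩).symm⟩

end RunningSup

section Regulator

variable {h : ℝ → ℝ} {T : ℝ}

lemma runningSup_posPart_eq_of_lt (hh : ContinuousOn h (Icc 0 T)) {a b : ℝ} (ha : 0 ≤ a)
    (hab : a ≤ b) (hb : b ≤ T)
    (hlt : ∀ u ∈ Icc a b, h u < runningSup (fun s => max (h s) 0) u) :
    runningSup (fun s => max (h s) 0) b = runningSup (fun s => max (h s) 0) a := by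
  set g := fun s => max (h s) 0
  have hg : ContinuousOn g (Icc 0 T) := hh.sup continuousOn_const
  obtain ⟨u, hu, hmax⟩ :=
    isCompact_Icc.exists_sSup_image_eq (nonempty_Icc.2 hab) (hg.mono (Icc_subset_Icc ha hb))
  have hsplit := runningSup_eq_max hg ha hab hb
  rw [hmax] at hsplit
  rw [hsplit, max_eq_left]
  by_contra! hgt
  have hMa : 0 ≤ runningSup g a :=
    (le_max_right (h 0) 0).trans (le_runningSup hg ⟨le_rfl, ha⟩ (hab.trans hb))
  have hhu : 0 < h u := by
    by_contra! hle
    have : g u = 0 := max_eq_right hle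
    linarith
  have hMu :=
    monotoneOn_runningSup hg ⟨ha.trans hu.1, hu.2.trans hb⟩ ⟨ha.trans hab, hb⟩ hu.2
  rw [hsplit, max_eq_right hgt.le, show g u = h u from max_eq_left hhu.le] at hMu
  linarith [hlt u hu]

lemma eventually_runningSup_posPart_eq (hh : ContinuousOn h (Icc 0 T)) {t : ℝ}
    (ht : t ∈ Icc 0 T) (hlt : h t < runningSup (fun s => max (h s) 0) t) :
    ∀ᶠ v in 𝓝[Icc 0 T] t,
      runningSup (fun s => max (h s) 0) v = runningSup (fun s => max (h s) 0) t := by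
  have hM := continuousOn_runningSup (g := fun s => max (h s) 0) (hh.sup continuousOn_const)
  obtain ⟨ε, hε, hsub⟩ :=
    Metric.mem_nhdsWithin_iff.1 (Tendsto.eventually_lt (hh t ht) (hM t ht) hlt)
  have hconn : OrdConnected (Metric.ball t ε ∩ Icc 0 T) := by
    rw [Real.ball_eq_Ioo]
    infer_instance
  have htS : t ∈ Metric.ball t ε ∩ Icc 0 T := ⟨Metric.mem_ball_self hε, ht⟩
  filter_upwards [self_mem_nhdsWithin, nhdsWithin_le_nhds (Metric.ball_mem_nhds t hε)]
    with v hv hvt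
  rcases le_total v t with hle | hle
  · exact (runningSup_posPart_eq_of_lt hh hv.1 hle ht.2
      fun u hu => hsub (hconn.out ⟨hvt, hv⟩ htS hu)).symm
  · exact runningSup_posPart_eq_of_lt hh ht.1 hle hv.2
      fun u hu => hsub (hconn.out htS ⟨hvt, hv⟩ hu)

end Regulator

namespace StieltjesFunction

lemma measure_eq_zero_of_eventually_eq (F : StieltjesFunction ℝ) {s : Set ℝ}
    (hs : ∀ t ∈ s, ∀ᶠ u in 𝓝 t, F u = F t) : F.measure s = 0 := by
  refine measure_null_of_locally_null s fun t ht => ?_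
  obtain ⟨ε, hε, hconst⟩ := Metric.nhds_basis_closedBall.eventually_iff.1 (hs t ht)
  refine ⟨Ioc (t - ε) (t + ε),
    mem_nhdsWithin_of_mem_nhds (Ioc_mem_nhds (by linarith) (by linarith)), ?_⟩
  have hmem : ∀ u ∈ Icc (t - ε) (t + ε), F u = F t := fun u hu =>
    hconst (by rwa [Real.closedBall_eq_Icc])
  rw [measure_Ioc, hmem (t + ε) ⟨by linarith, le_rfl⟩, hmem (t - ε) ⟨le_rfl, by linarith⟩,
    sub_self, ENNReal.ofReal_zero]

section OfMonotoneOnIcc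

variable {a b : ℝ} (hab : a ≤ b) {f : ℝ → ℝ} (hmono : MonotoneOn f (Icc a b))
  (hcont : ContinuousOn f (Icc a b))

noncomputable def ofMonotoneOnIcc : StieltjesFunction ℝ where
  toFun := IccExtend hab ((Icc a b).domRestrict f)
  mono' _ _ huv := hmono (projIcc a b hab _).2 (projIcc a b hab _).2 (monotone_projIcc hab huv)
  right_continuous' _ := hcont.domRestrict.Icc_extend'.continuousWithinAt

lemma ofMonotoneOnIcc_apply (u : ℝ) :
    ofMonotoneOnIcc hab hmono hcont u = f (projIcc a b hab u) := rfl

lemma continuous_ofMonotoneOnIcc : Continuous (ofMonotoneOnIcc hab hmono hcont) :=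
  hcont.domRestrict.Icc_extend'

lemma ofMonotoneOnIcc_eqOn : EqOn (ofMonotoneOnIcc hab hmono hcont) f (Icc a b) := fun u hu => by
  rw [ofMonotoneOnIcc_apply, projIcc_of_mem hab hu]

lemma eventually_ofMonotoneOnIcc_eq {t : ℝ} (ht : t ∈ Icc a b)
    (hev : ∀ᶠ v in 𝓝[Icc a b] t, f v = f t) :
    ∀ᶠ u in 𝓝 t, ofMonotoneOnIcc hab hmono hcont u = ofMonotoneOnIcc hab hmono hcont t := by
  have hproj : Tendsto (fun u => (projIcc a b hab u : ℝ)) (𝓝 t) (𝓝[Icc a b] t) := by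
    refine tendsto_nhdsWithin_iff.2 ⟨?_, Eventually.of_forall fun u => (projIcc a b hab u).2⟩
    exact (continuous_subtype_val.comp continuous_projIcc).tendsto' t t
      (by simp [projIcc_of_mem hab ht])
  filter_upwards [hproj.eventually hev] with u hu
  rw [ofMonotoneOnIcc_apply, hu, ofMonotoneOnIcc_eqOn hab hmono hcont ht]

end OfMonotoneOnIcc

end StieltjesFunction

/-- properties of the Skorokhod reflection (regulator/reflector) of a
continuous path `z` with nonnegative initial components. -/
theorem stmt0 (d : ℕ) (T : ℝ) (hT : 0 < T)
    (z : ℝ → Fin d → ℝ) (hz : ContinuousOn z (Icc 0 T)) (hz0 : ∀ i, 0 ≤ z 0 i)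
    (y : ℝ → Fin d → ℝ)
    (hy : ∀ t ∈ Icc (0:ℝ) T, ∀ i, y t i = sSup ((fun s => max (-(z s i)) 0) '' Icc 0 t))
    (x : ℝ → Fin d → ℝ) (hx : ∀ t ∈ Icc (0:ℝ) T, x t = z t + y t) :
    (∀ t ∈ Icc (0:ℝ) T, ∀ i, 0 ≤ x t i) ∧
    (∀ i, y 0 i = 0) ∧
    (∀ i, ContinuousOn (fun t => y t i) (Icc 0 T)) ∧
    (∀ i, MonotoneOn (fun t => y t i) (Icc 0 T)) ∧
    (∀ i, ∃ F : StieltjesFunction ℝ, (Continuous fun t => F t) ∧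
      (∀ t ∈ Icc (0:ℝ) T, F t = y t i) ∧
      F.measure {t | t ∈ Icc (0:ℝ) T ∧ 0 < x t i} = 0) := by
  have hh : ∀ i, ContinuousOn (fun s => -z s i) (Icc 0 T) :=
    fun i => ((continuous_apply i).comp_continuousOn hz).neg
  have hg : ∀ i, ContinuousOn (fun s => max (-z s i) 0) (Icc 0 T) :=
    fun i => (hh i).sup continuousOn_const
  have hyM : ∀ i, ∀ t ∈ Icc 0 T, y t i = runningSup (fun s => max (-z s i) 0) t :=
    fun i t ht => hy t ht i
  have hxM : ∀ i, ∀ t ∈ Icc 0 T, x t i = z t i + runningSup (fun s => max (-z s i) 0) t :=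
    fun i t ht => by rw [hx t ht, Pi.add_apply, hyM i t ht]
  refine ⟨fun t ht i => ?_, fun i => ?_,
    fun i => (continuousOn_runningSup (hg i)).congr fun t ht => hyM i t ht,
    fun i => (monotoneOn_runningSup (hg i)).congr fun t ht => (hyM i t ht).symm, fun i => ?_⟩
  · rw [hxM i t ht]
    linarith [le_max_left (-z t i) 0, le_runningSup (hg i) (right_mem_Icc.2 ht.1) ht.2]
  · rw [hyM i 0 (left_mem_Icc.2 hT.le), runningSup_zero, max_eq_right (neg_nonpos.2 (hz0 i))]
  · let F := StieltjesFunction.ofMonotoneOnIcc hT.le (monotoneOn_runningSup (hg i))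
      (continuousOn_runningSup (hg i))
    refine ⟨F, StieltjesFunction.continuous_ofMonotoneOnIcc _ _ _,
      fun t ht => (StieltjesFunction.ofMonotoneOnIcc_eqOn _ _ _ ht).trans (hyM i t ht).symm,
      F.measure_eq_zero_of_eventually_eq fun t ⟨ht, hxt⟩ => ?_⟩
    refine StieltjesFunction.eventually_ofMonotoneOnIcc_eq _ _ _ ht
      (eventually_runningSup_posPart_eq (hh i) ht ?_)
    linarith [hxM i t ht]
end

section
/- Let T>0 and let z:[0,T]→ℝ^d be continuous with z^i(0)≥0 for every i. Suppose (x,y) is a pair of continuous functions from [0,T] to ℝ^d such that: x = z + y; x(t) ∈ ℝ_+^d for all t; for each i, y^i(0)=0 and y^i is nondecreasing; and for each i the Lebesgue–Stieltjes measure of y^i assigns zero mass to {t : x^i(t) > 0}. Then y is uniquely determined: y^i(t) = sup_{s∈[0,t]} max(−z^i(s),0) for every i and every t ∈ [0,T], and consequently x = z + y is also uniquely determined. -/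
open Set MeasureTheory

/-!
The regulator `y` dominates `max (-z) 0` pointwise (because `x = z + y ≥ 0` and `y ≥ y 0 = 0`),
so by monotonicity `y t` dominates its running supremum `M`. Conversely, let `u` be the last time
in `[0, t]` with `y u ≤ M`. On `(u, t]` we have `y > M ≥ -z`, so `x > 0` there; hence the
measure `dy` does not charge `(u, t]`, and `y t = y u ≤ M`.
-/

theorem StieltjesFunction.le_of_measure_Ioc_eq_zero (F : StieltjesFunction ℝ) {a b : ℝ}
    (h : F.measure (Ioc a b) = 0) : F b ≤ F a := by
  rw [F.measure_Ioc, ENNReal.ofReal_eq_zero] at h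
  linarith

theorem le_of_forall_Ioc_lt_imp_le {y : ℝ → ℝ} {a b M : ℝ} (hab : a ≤ b)
    (hy : ContinuousOn y (Icc a b)) (ha : y a ≤ M)
    (hflat : ∀ u ∈ Icc a b, (∀ s ∈ Ioc u b, M < y s) → y b ≤ y u) : y b ≤ M := by
  set S := Icc a b ∩ y ⁻¹' Iic M
  have hS : IsClosed S := hy.preimage_isClosed_of_isClosed isClosed_Icc isClosed_Iic
  have hSbdd : BddAbove S := ⟨b, fun s hs => hs.1.2⟩
  have huS : sSup S ∈ S := hS.csSup_mem ⟨a, left_mem_Icc.2 hab, ha⟩ hSbdd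
  refine (hflat _ huS.1 fun s hs => ?_).trans huS.2
  by_contra! hsM
  exact hs.1.not_ge (le_csSup hSbdd ⟨⟨huS.1.1.trans hs.1.le, hs.2⟩, hsM⟩)

section Regulator

variable {z y : ℝ → ℝ} {t : ℝ}

theorem max_neg_le_of_monotoneOn (ht : 0 ≤ t) (hy0 : y 0 = 0) (hmono : MonotoneOn y (Icc 0 t))
    (hx : ∀ s ∈ Icc 0 t, 0 ≤ z s + y s) {s : ℝ} (hs : s ∈ Icc 0 t) : max (-z s) 0 ≤ y t := by
  have hys : 0 ≤ y s := hy0 ▸ hmono (left_mem_Icc.2 ht) hs hs.1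
  exact (max_le (by linarith [hx s hs]) hys).trans (hmono hs (right_mem_Icc.2 ht) hs.2)

theorem eq_sSup_max_neg_of_forall_Ioc_pos_imp_le (ht : 0 ≤ t) (hy0 : y 0 = 0)
    (hmono : MonotoneOn y (Icc 0 t)) (hcont : ContinuousOn y (Icc 0 t))
    (hx : ∀ s ∈ Icc 0 t, 0 ≤ z s + y s)
    (hflat : ∀ u ∈ Icc 0 t, (∀ s ∈ Ioc u t, 0 < z s + y s) → y t ≤ y u) :
    y t = sSup ((fun s => max (-z s) 0) '' Icc 0 t) := by
  have hle : ∀ s ∈ Icc 0 t, max (-z s) 0 ≤ y t := fun s hs =>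
    max_neg_le_of_monotoneOn ht hy0 hmono hx hs
  have hbdd : BddAbove ((fun s => max (-z s) 0) '' Icc 0 t) :=
    ⟨y t, forall_mem_image.2 hle⟩
  have hM : ∀ s ∈ Icc 0 t, max (-z s) 0 ≤ sSup ((fun s => max (-z s) 0) '' Icc 0 t) :=
    fun s hs => le_csSup hbdd (mem_image_of_mem _ hs)
  refine le_antisymm (le_of_forall_Ioc_lt_imp_le ht hcont ?_ fun u hu hu_lt => ?_)
    (csSup_le ((nonempty_Icc.2 ht).image _) (forall_mem_image.2 hle))
  · rw [hy0]
    exact (le_max_right _ _).trans (hM 0 (left_mem_Icc.2 ht))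
  · refine hflat u hu fun s hs => ?_
    have hst : s ∈ Icc 0 t := ⟨hu.1.trans hs.1.le, hs.2⟩
    linarith [hu_lt s hs, (le_max_left _ _).trans (hM s hst)]

end Regulator

theorem stmt1_general (d : ℕ) (T : ℝ)
    (z x y : ℝ → Fin d → ℝ)
    (hyc : ContinuousOn y (Icc 0 T))
    (hxy : ∀ t ∈ Icc (0:ℝ) T, x t = z t + y t)
    (hxpos : ∀ t ∈ Icc (0:ℝ) T, ∀ i, 0 ≤ x t i)
    (hy0 : ∀ i, y 0 i = 0)
    (hymono : ∀ i, MonotoneOn (fun t => y t i) (Icc 0 T))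
    (hsupp : ∀ i, ∃ F : StieltjesFunction ℝ, (Continuous fun t => F t) ∧
      (∀ t ∈ Icc (0:ℝ) T, F t = y t i) ∧
      F.measure {t | t ∈ Icc (0:ℝ) T ∧ 0 < x t i} = 0) :
    ∀ t ∈ Icc (0:ℝ) T, ∀ i,
      y t i = sSup ((fun s => max (-(z s i)) 0) '' Icc 0 t) ∧
      x t i = z t i + sSup ((fun s => max (-(z s i)) 0) '' Icc 0 t) := by
  intro t ht i
  have hsub : Icc 0 t ⊆ Icc 0 T := Icc_subset_Icc_right ht.2
  have hx : ∀ s ∈ Icc 0 T, x s i = z s i + y s i := fun s hs => congrFun (hxy s hs) i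
  obtain ⟨F, -, hFy, hF0⟩ := hsupp i
  have hflat : ∀ u ∈ Icc 0 t, (∀ s ∈ Ioc u t, 0 < z s i + y s i) → y t i ≤ y u i := by
    intro u hu hpos
    have hIoc : Ioc u t ⊆ {s | s ∈ Icc 0 T ∧ 0 < x s i} := fun s hs =>
      have hsT : s ∈ Icc 0 T := hsub ⟨hu.1.trans hs.1.le, hs.2⟩
      ⟨hsT, hx s hsT ▸ hpos s hs⟩
    have hFut := F.le_of_measure_Ioc_eq_zero (measure_mono_null hIoc hF0)
    rwa [hFy t ht, hFy u (hsub hu)] at hFut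
  have hyt := eq_sSup_max_neg_of_forall_Ioc_pos_imp_le ht.1 (hy0 i) ((hymono i).mono hsub)
    ((continuous_apply i).comp_continuousOn (hyc.mono hsub))
    (fun s hs => hx s (hsub hs) ▸ hxpos s (hsub hs) i) hflat
  exact ⟨hyt, hyt ▸ hx t ht⟩

/-- uniqueness for the Skorokhod problem: any solution `(x, y)` of the
Skorokhod problem for a continuous path `z` with nonnegative initial components is given
by the explicit regulator formula. -/
theorem stmt1 (d : ℕ) (T : ℝ) (hT : 0 < T)
    (z x y : ℝ → Fin d → ℝ)
    (hz : ContinuousOn z (Icc 0 T)) (hz0 : ∀ i, 0 ≤ z 0 i)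
    (hxc : ContinuousOn x (Icc 0 T)) (hyc : ContinuousOn y (Icc 0 T))
    (hxy : ∀ t ∈ Icc (0:ℝ) T, x t = z t + y t)
    (hxpos : ∀ t ∈ Icc (0:ℝ) T, ∀ i, 0 ≤ x t i)
    (hy0 : ∀ i, y 0 i = 0)
    (hymono : ∀ i, MonotoneOn (fun t => y t i) (Icc 0 T))
    (hsupp : ∀ i, ∃ F : StieltjesFunction ℝ, (Continuous fun t => F t) ∧
      (∀ t ∈ Icc (0:ℝ) T, F t = y t i) ∧
      F.measure {t | t ∈ Icc (0:ℝ) T ∧ 0 < x t i} = 0) :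
    ∀ t ∈ Icc (0:ℝ) T, ∀ i,
      y t i = sSup ((fun s => max (-(z s i)) 0) '' Icc 0 t) ∧
      x t i = z t i + sSup ((fun s => max (-(z s i)) 0) '' Icc 0 t) :=
  stmt1_general d T z x y hyc hxy hxpos hy0 hymono hsupp
end

section
/- Let T>0 and let z_1, z_2 : [0,T] → ℝ^d be continuous functions with nonnegative components at time 0. Let y_1, y_2 be their regulators and x_1 = z_1 + y_1, x_2 = z_2 + y_2 their reflectors. Then for every t ∈ [0,T]: sup_{s∈[0,t]} |y_1(s) − y_2(s)| ≤ sup_{s∈[0,t]} |z_1(s) − z_2(s)| (componentwise, hence with constant 1 per component), and sup_{s∈[0,t]} |x_1(s) − x_2(s)| ≤ 2 · sup_{s∈[0,t]} |z_1(s) − z_2(s)|, where |·| can be taken as the maximum of the absolute values of the components. -/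
/-!
Each component of the regulator is a running supremum of `max (-zⁱ) 0`, and both taking a
supremum over a fixed set and the map `a ↦ max (-a) 0` are 1-Lipschitz for pointwise
perturbations; so the regulators differ by at most `M = sup ‖z₁ - z₂‖`. The reflectors add
the difference of the `z`'s, hence the constant `2`.
-/

open Set

lemma csSup_image_sub_csSup_image_le {α : Type*} {f g : α → ℝ} {S : Set α} (hS : S.Nonempty)
    (hg : BddAbove (g '' S)) {M : ℝ} (h : ∀ u ∈ S, f u - g u ≤ M) :
    sSup (f '' S) - sSup (g '' S) ≤ M := by
  rw [sub_le_iff_le_add]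
  refine csSup_le (hS.image f) ?_
  rintro _ ⟨u, hu, rfl⟩
  linarith [h u hu, le_csSup hg ⟨u, hu, rfl⟩]

lemma abs_csSup_image_sub_csSup_image_le {α : Type*} {f g : α → ℝ} {S : Set α}
    (hS : S.Nonempty) (hf : BddAbove (f '' S)) (hg : BddAbove (g '' S)) {M : ℝ}
    (h : ∀ u ∈ S, |f u - g u| ≤ M) :
    |sSup (f '' S) - sSup (g '' S)| ≤ M := by
  rw [abs_sub_le_iff]
  exact ⟨csSup_image_sub_csSup_image_le hS hg fun u hu => (le_abs_self _).trans (h u hu),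
    csSup_image_sub_csSup_image_le hS hf fun u hu =>
      (le_abs_self _).trans (abs_sub_comm (f u) (g u) ▸ h u hu)⟩

lemma abs_sSup_max_neg_zero_sub_le {w₁ w₂ : ℝ → ℝ} {t M : ℝ} (ht : 0 ≤ t)
    (hw₁ : ContinuousOn w₁ (Icc 0 t)) (hw₂ : ContinuousOn w₂ (Icc 0 t))
    (h : ∀ s ∈ Icc 0 t, |w₁ s - w₂ s| ≤ M) :
    |sSup ((fun s => max (-w₁ s) 0) '' Icc 0 t) - sSup ((fun s => max (-w₂ s) 0) '' Icc 0 t)|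
      ≤ M := by
  refine abs_csSup_image_sub_csSup_image_le (nonempty_Icc.2 ht)
    (isCompact_Icc.bddAbove_image (hw₁.neg.sup continuousOn_const))
    (isCompact_Icc.bddAbove_image (hw₂.neg.sup continuousOn_const)) fun s hs => ?_
  calc |max (-w₁ s) 0 - max (-w₂ s) 0| ≤ |-w₁ s - -w₂ s| := abs_max_sub_max_le_abs _ _ _
    _ = |w₁ s - w₂ s| := by rw [← abs_neg]; ring_nf
    _ ≤ M := h s hs

theorem stmt2_general (d : ℕ) (T : ℝ)
    (z₁ z₂ : ℝ → Fin d → ℝ)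
    (hz₁ : ContinuousOn z₁ (Icc 0 T)) (hz₂ : ContinuousOn z₂ (Icc 0 T))
    (y₁ y₂ x₁ x₂ : ℝ → Fin d → ℝ)
    (hy₁ : ∀ t ∈ Icc (0:ℝ) T, ∀ i, y₁ t i = sSup ((fun s => max (-(z₁ s i)) 0) '' Icc 0 t))
    (hy₂ : ∀ t ∈ Icc (0:ℝ) T, ∀ i, y₂ t i = sSup ((fun s => max (-(z₂ s i)) 0) '' Icc 0 t))
    (hx₁ : ∀ t ∈ Icc (0:ℝ) T, x₁ t = z₁ t + y₁ t)
    (hx₂ : ∀ t ∈ Icc (0:ℝ) T, x₂ t = z₂ t + y₂ t) :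
    ∀ t ∈ Icc (0:ℝ) T,
      sSup ((fun s => ‖y₁ s - y₂ s‖) '' Icc 0 t) ≤
        sSup ((fun s => ‖z₁ s - z₂ s‖) '' Icc 0 t) ∧
      sSup ((fun s => ‖x₁ s - x₂ s‖) '' Icc 0 t) ≤
        2 * sSup ((fun s => ‖z₁ s - z₂ s‖) '' Icc 0 t) := by
  intro t ⟨ht0, htT⟩
  set M := sSup ((fun s => ‖z₁ s - z₂ s‖) '' Icc 0 t)
  have hsub : Icc (0:ℝ) t ⊆ Icc 0 T := Icc_subset_Icc le_rfl htT
  have hzle : ∀ s ∈ Icc (0:ℝ) t, ‖z₁ s - z₂ s‖ ≤ M := fun s hs =>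
    le_csSup (isCompact_Icc.bddAbove_image ((hz₁.mono hsub).sub (hz₂.mono hsub)).norm)
      ⟨s, hs, rfl⟩
  have hM0 : 0 ≤ M := (norm_nonneg _).trans (hzle 0 ⟨le_rfl, ht0⟩)
  have hyle : ∀ s ∈ Icc (0:ℝ) t, ‖y₁ s - y₂ s‖ ≤ M := by
    intro s hs
    have hsub' : Icc (0:ℝ) s ⊆ Icc 0 T := (Icc_subset_Icc le_rfl hs.2).trans hsub
    refine (pi_norm_le_iff_of_nonneg hM0).2 fun i => ?_
    rw [Pi.sub_apply, hy₁ s (hsub hs) i, hy₂ s (hsub hs) i, Real.norm_eq_abs]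
    refine abs_sSup_max_neg_zero_sub_le hs.1 (continuousOn_pi.1 (hz₁.mono hsub') i)
      (continuousOn_pi.1 (hz₂.mono hsub') i) fun u hu => ?_
    exact (norm_le_pi_norm (z₁ u - z₂ u) i).trans (hzle u ⟨hu.1, hu.2.trans hs.2⟩)
  have hxle : ∀ s ∈ Icc (0:ℝ) t, ‖x₁ s - x₂ s‖ ≤ 2 * M := by
    intro s hs
    calc ‖x₁ s - x₂ s‖ = ‖(z₁ s - z₂ s) + (y₁ s - y₂ s)‖ := by
          rw [hx₁ s (hsub hs), hx₂ s (hsub hs)]; abel_nf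
      _ ≤ ‖z₁ s - z₂ s‖ + ‖y₁ s - y₂ s‖ := norm_add_le _ _
      _ ≤ 2 * M := by linarith [hzle s hs, hyle s hs]
  have hne : (Icc (0:ℝ) t).Nonempty := nonempty_Icc.2 ht0
  exact ⟨csSup_le (hne.image _) (forall_mem_image.2 hyle),
    csSup_le (hne.image _) (forall_mem_image.2 hxle)⟩

/-- Lipschitz property (in sup norm) of the Skorokhod map: the regulators
satisfy a sup-norm bound with constant 1 and the reflectors with constant 2.  Here the
norm on `ℝ^d` (i.e. `Fin d → ℝ`) is the max of absolute values of the components. -/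
theorem stmt2 (d : ℕ) (T : ℝ) (hT : 0 < T)
    (z₁ z₂ : ℝ → Fin d → ℝ)
    (hz₁ : ContinuousOn z₁ (Icc 0 T)) (hz₂ : ContinuousOn z₂ (Icc 0 T))
    (hz₁0 : ∀ i, 0 ≤ z₁ 0 i) (hz₂0 : ∀ i, 0 ≤ z₂ 0 i)
    (y₁ y₂ x₁ x₂ : ℝ → Fin d → ℝ)
    (hy₁ : ∀ t ∈ Icc (0:ℝ) T, ∀ i, y₁ t i = sSup ((fun s => max (-(z₁ s i)) 0) '' Icc 0 t))
    (hy₂ : ∀ t ∈ Icc (0:ℝ) T, ∀ i, y₂ t i = sSup ((fun s => max (-(z₂ s i)) 0) '' Icc 0 t))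
    (hx₁ : ∀ t ∈ Icc (0:ℝ) T, x₁ t = z₁ t + y₁ t)
    (hx₂ : ∀ t ∈ Icc (0:ℝ) T, x₂ t = z₂ t + y₂ t) :
    ∀ t ∈ Icc (0:ℝ) T,
      sSup ((fun s => ‖y₁ s - y₂ s‖) '' Icc 0 t) ≤
        sSup ((fun s => ‖z₁ s - z₂ s‖) '' Icc 0 t) ∧
      sSup ((fun s => ‖x₁ s - x₂ s‖) '' Icc 0 t) ≤
        2 * sSup ((fun s => ‖z₁ s - z₂ s‖) '' Icc 0 t) :=
  stmt2_general d T z₁ z₂ hz₁ hz₂ y₁ y₂ x₁ x₂ hy₁ hy₂ hx₁ hx₂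
end

section
/- Let 0 < t_1 < t_2 < t and λ ∈ (0,1). Define z_1, z_2 : [0,t] → ℝ by z_1(s) = ((t_2−s)/(t_2−t_1) − 1)·1_{(t_1,t_2]}(s) − 1_{(t_2,t]}(s) and z_2(s) = (s/t_1)·1_{[0,t_1]}(s) + ((t_2−s)/(t_2−t_1))·1_{(t_1,t_2]}(s), so that z_1(0)=z_2(0)=0. Let y_1, y_2 be the regulators of z_1, z_2. Then y_1(s) = (1 − (t_2−s)/(t_2−t_1))·1_{(t_1,t_2]}(s) + 1_{(t_2,t]}(s), y_2 ≡ 0, and the λ-Hölder seminorms satisfy ‖y_2 − y_1‖_{λ,[0,t]} = (t_2−t_1)^{−λ} while ‖z_2 − z_1‖_{λ,[0,t]} = t_1^{−λ}. -/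
/-!
Both paths are built from the ramps `R₁ = ramp 0 t₁` and `R₂ = ramp t₁ (t₂ - t₁)`:
`z₁ = -R₂` and `z₂ = R₁ - R₂ ≥ 0`. The regulator of a path whose negative part is already
nondecreasing is that negative part, so `y₁ = R₂` and `y₂ = 0`; hence `y₂ - y₁ = -R₂` while
`z₂ - z₁ = R₁`. A ramp of width `c` has increments at most `min 1 (|v - u| / c)` and rises by `1`
over its width, so its `λ`-Hölder seminorm is exactly `c ^ (-λ)`, since `min 1 x ≤ x ^ λ`.
-/

open Set

/-- The `λ`-Hölder seminorm of `f` on `[a,b]`. -/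
noncomputable def hSemi {E : Type*} [NormedAddCommGroup E] (l a b : ℝ) (f : ℝ → E) : ℝ :=
  sSup {r : ℝ | ∃ u v : ℝ, a ≤ u ∧ u < v ∧ v ≤ b ∧ r = ‖f v - f u‖ / (v - u) ^ l}

/-- The regulator of a scalar path `z`. -/
noncomputable def reg1 (z : ℝ → ℝ) (s : ℝ) : ℝ :=
  sSup ((fun u => max (-(z u)) 0) '' Icc 0 s)

noncomputable def ramp (a c s : ℝ) : ℝ := max 0 (min 1 ((s - a) / c))

section Ramp

variable {a c s : ℝ}

lemma ramp_nonneg : 0 ≤ ramp a c s := le_max_left _ _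

lemma ramp_le_one : ramp a c s ≤ 1 := max_le zero_le_one (min_le_left _ _)

lemma ramp_of_le (hc : 0 ≤ c) (hs : s ≤ a) : ramp a c s = 0 :=
  max_eq_left ((min_le_right _ _).trans (div_nonpos_of_nonpos_of_nonneg (by linarith) hc))

lemma ramp_of_ge (hc : 0 < c) (hs : a + c ≤ s) : ramp a c s = 1 := by
  rw [ramp, min_eq_left ((one_le_div hc).mpr (by linarith)), max_eq_right zero_le_one]

lemma ramp_of_mem_Icc (hc : 0 < c) (hs : s ∈ Icc a (a + c)) : ramp a c s = (s - a) / c := by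
  rw [ramp, min_eq_right ((div_le_one hc).mpr (by linarith [hs.2])),
    max_eq_right (div_nonneg (by linarith [hs.1]) hc.le)]

lemma ramp_le_ramp {a' c' : ℝ} (hc : 0 < c) (hc' : 0 ≤ c') (h : a + c ≤ a') :
    ramp a' c' s ≤ ramp a c s := by
  rcases le_total s a' with hs | hs
  · exact (ramp_of_le hc' hs).trans_le ramp_nonneg
  · exact ramp_le_one.trans_eq (ramp_of_ge hc (h.trans hs)).symm

lemma monotone_ramp (hc : 0 ≤ c) : Monotone (ramp a c) := fun _ _ h => by
  unfold ramp
  gcongr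

lemma abs_ramp_sub_ramp_le (hc : 0 < c) (u v : ℝ) :
    |ramp a c v - ramp a c u| ≤ min 1 (|v - u| / c) := by
  refine le_min (abs_sub_le_iff.mpr ⟨?_, ?_⟩) ?_
  · linarith [@ramp_le_one a c v, @ramp_nonneg a c u]
  · linarith [@ramp_le_one a c u, @ramp_nonneg a c v]
  calc |ramp a c v - ramp a c u|
      ≤ |min 1 ((v - a) / c) - min 1 ((u - a) / c)| := by
        simpa only [ramp, max_comm (0 : ℝ)] using abs_max_sub_max_le_abs _ _ (0 : ℝ)
    _ ≤ |(v - a) / c - (u - a) / c| := abs_min_sub_min_le_max _ _ _ _ |>.trans (by simp)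
    _ = |v - u| / c := by rw [← sub_div, abs_div, abs_of_pos hc, sub_sub_sub_cancel_right]

end Ramp

lemma min_one_le_rpow {x l : ℝ} (hx : 0 ≤ x) (hl : l ∈ Icc (0 : ℝ) 1) : min 1 x ≤ x ^ l := by
  rcases le_total x 1 with hx1 | hx1
  · calc min 1 x ≤ x := min_le_right _ _
      _ = x ^ (1 : ℝ) := (Real.rpow_one x).symm
      _ ≤ x ^ l := Real.rpow_le_rpow_of_exponent_ge' hx hx1 hl.1 hl.2
  · exact (min_le_left _ _).trans (Real.one_le_rpow hx1 hl.1)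

section Holder

variable {l a b : ℝ}

lemma hSemi_congr {f g : ℝ → ℝ} (h : EqOn f g (Icc a b)) : hSemi l a b f = hSemi l a b g := by
  unfold hSemi
  congr 1
  ext r
  refine exists₂_congr fun u v => ?_
  constructor <;> rintro ⟨hu, huv, hv, rfl⟩ <;> refine ⟨hu, huv, hv, ?_⟩ <;>
    rw [h ⟨hu, huv.le.trans hv⟩, h ⟨hu.trans huv.le, hv⟩]

lemma hSemi_neg (f : ℝ → ℝ) : hSemi l a b (-f) = hSemi l a b f := by
  simp only [hSemi, Pi.neg_apply, ← neg_sub', norm_neg]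

lemma hSemi_eq_rpow_neg {g : ℝ → ℝ} {c u₀ v₀ : ℝ} (hc : 0 < c) (hl : l ∈ Icc (0 : ℝ) 1)
    (hbound : ∀ u v, |g v - g u| ≤ min 1 (|v - u| / c))
    (hu₀ : a ≤ u₀) (hv₀ : v₀ ≤ b) (hgap : v₀ - u₀ = c) (hjump : |g v₀ - g u₀| = 1) :
    hSemi l a b g = c ^ (-l) := by
  refine IsGreatest.csSup_eq ⟨⟨u₀, v₀, hu₀, by linarith, hv₀, ?_⟩, ?_⟩
  · rw [Real.norm_eq_abs, hjump, hgap, Real.rpow_neg hc.le, one_div]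
  rintro r ⟨u, v, -, huv, -, rfl⟩
  have hd : 0 < v - u := sub_pos.mpr huv
  rw [Real.norm_eq_abs, div_le_iff₀ (Real.rpow_pos_of_pos hd l)]
  calc |g v - g u| ≤ min 1 ((v - u) / c) := by simpa only [abs_of_pos hd] using hbound u v
    _ ≤ ((v - u) / c) ^ l := min_one_le_rpow (div_pos hd hc).le hl
    _ = c ^ (-l) * (v - u) ^ l := by
      rw [Real.div_rpow hd.le hc.le, Real.rpow_neg hc.le, div_eq_inv_mul]

lemma hSemi_ramp {s₀ c : ℝ} (hc : 0 < c) (hl : l ∈ Icc (0 : ℝ) 1) (ha : a ≤ s₀)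
    (hb : s₀ + c ≤ b) : hSemi l a b (ramp s₀ c) = c ^ (-l) :=
  hSemi_eq_rpow_neg hc hl (abs_ramp_sub_ramp_le hc) ha hb (add_sub_cancel_left s₀ c) <| by
    rw [ramp_of_ge hc le_rfl, ramp_of_le hc.le le_rfl, sub_zero, abs_one]

end Holder

lemma reg1_eq_of_eqOn {z f : ℝ → ℝ} {s : ℝ} (hs : 0 ≤ s) (hf : Monotone f)
    (h : EqOn (fun u => max (-z u) 0) f (Icc 0 s)) : reg1 z s = f s := by
  rw [reg1, image_congr h, (hf.map_isGreatest (isGreatest_Icc hs)).csSup_eq]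

lemma ramp_eq_indicator {a b t s : ℝ} (hab : a < b) (hs : s ≤ t) :
    ramp a (b - a) s = indicator (Ioc a b) (fun s => 1 - (b - s) / (b - a)) s
      + indicator (Ioc b t) (fun _ => 1) s := by
  have hc : 0 < b - a := sub_pos.mpr hab
  simp only [indicator_apply, mem_Ioc]
  split_ifs with h₁ h₂ h₂
  · linarith [h₁.2, h₂.1]
  · rw [ramp_of_mem_Icc hc ⟨h₁.1.le, by linarith [h₁.2]⟩]
    field_simp
    ring
  · rw [ramp_of_ge hc (by linarith [h₂.1])]
    ring
  · rw [ramp_of_le hc.le (by grind)]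
    ring

lemma indicator_eq_ramp_sub_ramp {t₁ t₂ s : ℝ} (h0 : 0 < t₁) (h1 : t₁ < t₂) (hs : 0 ≤ s) :
    indicator (Icc 0 t₁) (fun s => s / t₁) s
      + indicator (Ioc t₁ t₂) (fun s => (t₂ - s) / (t₂ - t₁)) s
      = ramp 0 t₁ s - ramp t₁ (t₂ - t₁) s := by
  have hc : 0 < t₂ - t₁ := sub_pos.mpr h1
  simp only [indicator_apply, mem_Ioc, mem_Icc]
  split_ifs with h₁ h₂ h₂
  · linarith [h₁.2, h₂.1]
  · rw [ramp_of_mem_Icc h0 ⟨hs, by simpa using h₁.2⟩, ramp_of_le hc.le h₁.2]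
    ring
  · rw [ramp_of_ge h0 (by linarith [h₂.1]), ramp_of_mem_Icc hc ⟨h₂.1.le, by linarith [h₂.2]⟩]
    field_simp
    ring
  · rw [ramp_of_ge h0 (by grind), ramp_of_ge hc (by grind)]
    ring

/-- the explicit counterexample showing the Hölder seminorm of the
difference of two regulators is not controlled by that of the difference of the paths. -/
theorem stmt4 (t₁ t₂ t l : ℝ) (h0 : 0 < t₁) (h1 : t₁ < t₂) (h2 : t₂ < t)
    (hl : l ∈ Ioo (0:ℝ) 1)
    (z₁ z₂ : ℝ → ℝ)
    (hz₁ : z₁ = fun s => indicator (Ioc t₁ t₂) (fun s => (t₂ - s) / (t₂ - t₁) - 1) s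
                 - indicator (Ioc t₂ t) (fun _ => 1) s)
    (hz₂ : z₂ = fun s => indicator (Icc 0 t₁) (fun s => s / t₁) s
                 + indicator (Ioc t₁ t₂) (fun s => (t₂ - s) / (t₂ - t₁)) s) :
    (∀ s ∈ Icc (0:ℝ) t, reg1 z₁ s =
        indicator (Ioc t₁ t₂) (fun s => 1 - (t₂ - s) / (t₂ - t₁)) s
        + indicator (Ioc t₂ t) (fun _ => 1) s) ∧
    (∀ s ∈ Icc (0:ℝ) t, reg1 z₂ s = 0) ∧
    hSemi l 0 t (fun s => reg1 z₂ s - reg1 z₁ s) = (t₂ - t₁) ^ (-l) ∧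
    hSemi l 0 t (fun s => z₂ s - z₁ s) = t₁ ^ (-l) := by
  have hc : 0 < t₂ - t₁ := sub_pos.mpr h1
  have hl' : l ∈ Icc (0 : ℝ) 1 := Ioo_subset_Icc_self hl
  have hz₁_eq : ∀ s ≤ t, z₁ s = -ramp t₁ (t₂ - t₁) s := fun s hs => by
    rw [ramp_eq_indicator h1 hs, hz₁]
    simp only [indicator_apply]
    split_ifs <;> ring
  have hz₂_eq : ∀ s, 0 ≤ s → z₂ s = ramp 0 t₁ s - ramp t₁ (t₂ - t₁) s := fun s hs =>
    hz₂ ▸ indicator_eq_ramp_sub_ramp h0 h1 hs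
  have hy₁ : ∀ s ∈ Icc (0:ℝ) t, reg1 z₁ s = ramp t₁ (t₂ - t₁) s := fun s hs =>
    reg1_eq_of_eqOn hs.1 (monotone_ramp hc.le) fun u hu => by
      simp only [hz₁_eq u (hu.2.trans hs.2), neg_neg, max_eq_left ramp_nonneg]
  have hy₂ : ∀ s ∈ Icc (0:ℝ) t, reg1 z₂ s = 0 := fun s hs =>
    reg1_eq_of_eqOn hs.1 monotone_const fun u hu => by
      have : ramp t₁ (t₂ - t₁) u ≤ ramp 0 t₁ u := ramp_le_ramp h0 hc.le (zero_add t₁).le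
      simp only [hz₂_eq u hu.1, neg_sub, max_eq_right (sub_nonpos.mpr this)]
  refine ⟨fun s hs => (hy₁ s hs).trans (ramp_eq_indicator h1 hs.2), hy₂, ?_, ?_⟩
  · rw [hSemi_congr (g := -ramp t₁ (t₂ - t₁)) fun s hs => by simp [hy₁ s hs, hy₂ s hs],
      hSemi_neg, hSemi_ramp hc hl' h0.le (by linarith)]
  · rw [hSemi_congr (g := ramp 0 t₁) fun s hs => by simp [hz₁_eq s hs.2, hz₂_eq s hs.1],
      hSemi_ramp h0 hl' le_rfl (by linarith)]
end

section
/- Let λ ∈ (0,1). For every constant C > 0 there exist continuous functions z_1, z_2 : [0,1] → ℝ with z_1(0) = z_2(0) = 0 and finite λ-Hölder seminorms such that their regulators y_1, y_2 satisfy ‖y_1 − y_2‖_{λ,[0,1]} > C · ‖z_1 − z_2‖_{λ,[0,1]}. In other words, the λ-Hölder seminorm of the difference of two regulator terms cannot in general be bounded by a constant times the λ-Hölder seminorm of the difference of the underlying paths. -/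
/-!
The path `twinWells` has two wells of depth `1/4`, at times `1/4` and `3/4`, so its regulator is
constant `1/4` from time `1/4` on. Tilting it by `-2hs` deepens the second well by `3h/2` but keeps
the tilted regulator below `1/4 + h/2` up to time `3/4 - h`; hence the difference of the regulators
rises by `h` over a time interval of length `h`, a Hölder quotient `h / h^λ`, while the two paths
differ by the linear function `2hs`, of seminorm at most `2h`. The ratio `1 / (2h^λ)` is unbounded
as `h → 0`. All paths involved are Lipschitz, which on `[0,1]` bounds every Hölder quotient, so the
suprema defining the seminorms are finite rather than junk values.
-/

open Set

open Filter Topology NNReal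

section HolderSeminorm

variable {E : Type*} [NormedAddCommGroup E] {l a b : ℝ} {K : ℝ≥0} {f : ℝ → E}

theorem LipschitzOnWith.norm_sub_le_mul_rpow {s : Set ℝ} (hf : LipschitzOnWith K f s)
    (hl : l ≤ 1) {u v : ℝ} (hu : u ∈ s) (hv : v ∈ s) (huv : |v - u| ≤ 1) :
    ‖f v - f u‖ ≤ K * |v - u| ^ l :=
  calc ‖f v - f u‖ = dist (f v) (f u) := (dist_eq_norm _ _).symm
    _ ≤ K * dist v u := hf.dist_le_mul v hv u hu
    _ ≤ K * |v - u| ^ l := by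
      rw [Real.dist_eq]
      gcongr
      exact Real.self_le_rpow_of_le_one (abs_nonneg _) huv hl

theorem LipschitzOnWith.holderQuotient_le (hf : LipschitzOnWith K f (Icc a b)) (hba : b - a ≤ 1)
    (hl : l ≤ 1) {u v : ℝ} (hau : a ≤ u) (huv : u < v) (hvb : v ≤ b) :
    ‖f v - f u‖ / (v - u) ^ l ≤ K := by
  have hvu : 0 < v - u := sub_pos.2 huv
  rw [div_le_iff₀ (Real.rpow_pos_of_pos hvu l)]
  simpa only [abs_of_pos hvu] using hf.norm_sub_le_mul_rpow hl ⟨hau, huv.le.trans hvb⟩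
    ⟨hau.trans huv.le, hvb⟩ (by rw [abs_of_pos hvu]; linarith)

theorem LipschitzOnWith.hSemi_le (hf : LipschitzOnWith K f (Icc a b)) (hab : a < b)
    (hba : b - a ≤ 1) (hl : l ≤ 1) : hSemi l a b f ≤ K := by
  refine csSup_le ⟨_, a, b, le_rfl, hab, le_rfl, rfl⟩ ?_
  rintro r ⟨u, v, hau, huv, hvb, rfl⟩
  exact hf.holderQuotient_le hba hl hau huv hvb

theorem LipschitzOnWith.holderQuotient_le_hSemi (hf : LipschitzOnWith K f (Icc a b))
    (hba : b - a ≤ 1) (hl : l ≤ 1) {u v : ℝ} (hau : a ≤ u) (huv : u < v) (hvb : v ≤ b) :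
    ‖f v - f u‖ / (v - u) ^ l ≤ hSemi l a b f := by
  refine le_csSup ⟨K, ?_⟩ ⟨u, v, hau, huv, hvb, rfl⟩
  rintro r ⟨u, v, hau, huv, hvb, rfl⟩
  exact hf.holderQuotient_le hba hl hau huv hvb

end HolderSeminorm

section Regulator

theorem lipschitzOnWith_sSup_image_Icc {g : ℝ → ℝ} {K : ℝ≥0} (hg : LipschitzWith K g) :
    LipschitzOnWith K (fun s => sSup (g '' Icc 0 s)) (Ici 0) := by
  refine LipschitzOnWith.of_le_add_mul K fun x hx y hy => ?_
  refine csSup_le ((nonempty_Icc.2 hx).image g) ?_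
  rintro _ ⟨w, hw, rfl⟩
  have hbdd : BddAbove (g '' Icc 0 y) := isCompact_Icc.bddAbove_image hg.continuous.continuousOn
  have hdist : dist w (min w y) ≤ dist x y := by
    rcases le_total w y with hwy | hyw
    · simp [min_eq_left hwy]
    · rw [min_eq_right hyw, Real.dist_eq, Real.dist_eq, abs_of_nonneg (sub_nonneg.2 hyw)]
      exact (sub_le_sub_right hw.2 y).trans (le_abs_self _)
  calc g w ≤ g (min w y) + K * dist w (min w y) := hg.le_add_mul _ _
    _ ≤ sSup (g '' Icc 0 y) + K * dist x y := by
      gcongr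
      exact le_csSup hbdd ⟨_, ⟨le_min hw.1 hy, min_le_right _ _⟩, rfl⟩

variable {z : ℝ → ℝ} {s M : ℝ}

theorem LipschitzWith.lipschitzOnWith_reg1 {K : ℝ≥0} (hz : LipschitzWith K z) :
    LipschitzOnWith K (reg1 z) (Ici 0) :=
  lipschitzOnWith_sSup_image_Icc (hz.neg.max_const 0)

theorem reg1_le (hs : 0 ≤ s) (hM : 0 ≤ M) (h : ∀ w ∈ Icc 0 s, -z w ≤ M) : reg1 z s ≤ M := by
  refine csSup_le ((nonempty_Icc.2 hs).image _) ?_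
  rintro _ ⟨w, hw, rfl⟩
  exact max_le (h w hw) hM

theorem neg_le_reg1 (hz : ContinuousOn z (Icc 0 s)) {w : ℝ} (hw : w ∈ Icc 0 s) :
    -z w ≤ reg1 z s :=
  (le_max_left _ _).trans <|
    le_csSup (isCompact_Icc.bddAbove_image (by fun_prop)) ⟨w, hw, rfl⟩

end Regulator

noncomputable def twinWells (s : ℝ) : ℝ := min |s - 1/4| |s - 3/4| - 1/4

theorem twinWells_zero : twinWells 0 = 0 := by norm_num [twinWells]

theorem lipschitzWith_twinWells : LipschitzWith 1 twinWells := by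
  show LipschitzWith 1 fun s => min |s - 1/4| |s - 3/4| - 1/4
  simpa [Real.dist_eq] using
    ((LipschitzWith.dist_left (1/4 : ℝ)).min (LipschitzWith.dist_left (3/4 : ℝ))).sub
      (LipschitzWith.const (1/4 : ℝ))

theorem reg1_twinWells {s : ℝ} (hs : 1/4 ≤ s) : reg1 twinWells s = 1/4 := by
  refine le_antisymm (reg1_le (by linarith) (by norm_num) fun w _ => ?_) ?_
  · have := le_min (abs_nonneg (w - 1/4)) (abs_nonneg (w - 3/4))
    simp only [twinWells]
    linarith
  · simpa [twinWells] using neg_le_reg1 lipschitzWith_twinWells.continuous.continuousOn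
      (show (1/4 : ℝ) ∈ Icc 0 s from ⟨by norm_num, hs⟩)

noncomputable def tiltedWells (h s : ℝ) : ℝ := twinWells s - 2 * h * s

theorem neg_le_tiltedWells {h w : ℝ} (hh0 : 0 ≤ h) (hh : h ≤ 1/2) (hw : w ≤ 3/4 - h) :
    -(1/4 + h/2) ≤ tiltedWells h w := by
  have h₁ : 2 * h * (w - 1/4) ≤ |w - 1/4| := by
    calc 2 * h * (w - 1/4) ≤ |2 * h * (w - 1/4)| := le_abs_self _
      _ = 2 * h * |w - 1/4| := by rw [abs_mul, abs_of_nonneg (by positivity)]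
      _ ≤ |w - 1/4| := mul_le_of_le_one_left (abs_nonneg _) (by linarith)
  have h₂ : 2 * h * (w - 1/4) ≤ |w - 3/4| := by
    rw [abs_sub_comm, abs_of_nonneg (by linarith)]
    nlinarith
  have := le_min h₁ h₂
  simp only [tiltedWells, twinWells]
  linarith

theorem lipschitzWith_tiltedWells (h : ℝ) : LipschitzWith (1 + ‖2 * h‖₊) (tiltedWells h) :=
  lipschitzWith_twinWells.sub (lipschitzWith_smul (2 * h))

theorem lipschitzWith_tiltedWells_sub_twinWells (h : ℝ) :
    LipschitzWith ‖2 * h‖₊ fun s => tiltedWells h s - twinWells s := by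
  rw [show (fun s => tiltedWells h s - twinWells s) = -fun s : ℝ => (2 * h) • s by
    funext s; simp only [tiltedWells, Pi.neg_apply, smul_eq_mul]; ring]
  exact (lipschitzWith_smul (2 * h)).neg

theorem le_sub_reg1_tiltedWells {h : ℝ} (hh0 : 0 ≤ h) (hh : h ≤ 1/2) :
    h ≤ (reg1 (tiltedWells h) (3/4) - reg1 twinWells (3/4)) -
      (reg1 (tiltedWells h) (3/4 - h) - reg1 twinWells (3/4 - h)) := by
  have hpeak := neg_le_reg1 (lipschitzWith_tiltedWells h).continuous.continuousOn
    (show (3/4 : ℝ) ∈ Icc 0 (3/4) by norm_num)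
  have hbefore : reg1 (tiltedWells h) (3/4 - h) ≤ 1/4 + h/2 :=
    reg1_le (by linarith) (by positivity) fun w hw =>
      neg_le.1 (neg_le_tiltedWells hh0 hh hw.2)
  rw [reg1_twinWells (by norm_num), reg1_twinWells (by linarith)]
  have hwell : twinWells (3/4) = -1/4 := by norm_num [twinWells]
  simp only [tiltedWells] at hpeak
  linarith

theorem exists_rpow_lt {l ε : ℝ} (hl : 0 < l) (hε : 0 < ε) :
    ∃ h ∈ Ioc (0 : ℝ) (1/2), h ^ l < ε := by
  have hlim : Tendsto (fun h : ℝ => h ^ l) (𝓝[>] 0) (𝓝 0) := by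
    simpa [Real.zero_rpow hl.ne'] using
      (Real.continuousAt_rpow_const 0 l (Or.inr hl.le)).tendsto.mono_left nhdsWithin_le_nhds
  obtain ⟨h, hlt, hmem⟩ := ((hlim.eventually (gt_mem_nhds hε)).and
    (Ioc_mem_nhdsGT (by norm_num : (0 : ℝ) < 1/2))).exists
  exact ⟨h, hmem, hlt⟩

/-- no constant `C` can bound the Hölder seminorm of the difference of two
regulators by `C` times the Hölder seminorm of the difference of the underlying paths. -/
theorem stmt5 (l : ℝ) (hl : l ∈ Ioo (0:ℝ) 1) (C : ℝ) (hC : 0 < C) :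
    ∃ z₁ z₂ : ℝ → ℝ,
      ContinuousOn z₁ (Icc 0 1) ∧ ContinuousOn z₂ (Icc 0 1) ∧
      z₁ 0 = 0 ∧ z₂ 0 = 0 ∧
      (∃ C₁, ∀ u ∈ Icc (0:ℝ) 1, ∀ v ∈ Icc (0:ℝ) 1, |z₁ v - z₁ u| ≤ C₁ * |v - u| ^ l) ∧
      (∃ C₂, ∀ u ∈ Icc (0:ℝ) 1, ∀ v ∈ Icc (0:ℝ) 1, |z₂ v - z₂ u| ≤ C₂ * |v - u| ^ l) ∧
      C * hSemi l 0 1 (fun s => z₁ s - z₂ s) <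
        hSemi l 0 1 (fun s => reg1 z₁ s - reg1 z₂ s) := by
  obtain ⟨h, ⟨hh0, hh⟩, hhl⟩ := exists_rpow_lt hl.1 (by positivity : 0 < 1 / (2 * C))
  have hz₁ := lipschitzWith_tiltedWells h
  have hz₂ := lipschitzWith_twinWells
  have hD := (hz₁.lipschitzOnWith_reg1.sub hz₂.lipschitzOnWith_reg1).mono
    (Icc_subset_Ici_self : Icc (0 : ℝ) 1 ⊆ _)
  refine ⟨tiltedWells h, twinWells, hz₁.continuous.continuousOn, hz₂.continuous.continuousOn,
    by simp [tiltedWells, twinWells_zero], twinWells_zero,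
    ⟨_, fun u hu v hv => hz₁.lipschitzOnWith.norm_sub_le_mul_rpow hl.2.le hu hv
      (Real.dist_le_of_mem_Icc_01 hv hu)⟩,
    ⟨_, fun u hu v hv => hz₂.lipschitzOnWith.norm_sub_le_mul_rpow hl.2.le hu hv
      (Real.dist_le_of_mem_Icc_01 hv hu)⟩, ?_⟩
  have hpow : 0 < h ^ l := Real.rpow_pos_of_pos hh0 l
  calc C * hSemi l 0 1 (fun s => tiltedWells h s - twinWells s) ≤ C * (2 * h) := by
        gcongr
        simpa [abs_of_pos hh0] using
          (lipschitzWith_tiltedWells_sub_twinWells h).lipschitzOnWith.hSemi_le one_pos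
            (by norm_num) hl.2.le
    _ < h / h ^ l := by
        rw [lt_div_iff₀ hpow]
        rw [lt_div_iff₀ (by positivity)] at hhl
        nlinarith
    _ ≤ _ / (3/4 - (3/4 - h)) ^ l := by
        rw [sub_sub_cancel]
        gcongr
        exact (le_sub_reg1_tiltedWells hh0.le hh).trans (le_abs_self _)
    _ ≤ _ := hD.holderQuotient_le_hSemi (by norm_num) hl.2.le (by linarith) (by linarith)
        (by norm_num)
end
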